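/- If T is a bounded operator on a Hilbert space such that (T, 0) is annihilated by a Γ-distinguished polynomial f, then f(z₁,z₂) is not divisible by z₂, and writing f(z₁,0) = p(z₁), p is a non-constant single-variable polynomial with p(T) = 0; hence σ(T) is a finite set contained in Z(p). If moreover the numerical radius ω(T) ≤ 1, then σ(T) ⊆ 𝔻 (the open unit disc). -/

import Mathlib

noncomputable section

def G2 : Set (ℂ × ℂ) :=
  {w | ∃ z₁ z₂ : ℂ, ‖z₁‖ < 1 ∧ ‖z₂‖ < 1 ∧ w = (z₁ + z₂, z₁ * z₂)}

def GammaSet : Set (ℂ × ℂ) :=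
  {w | ∃ z₁ z₂ : ℂ, ‖z₁‖ ≤ 1 ∧ ‖z₂‖ ≤ 1 ∧ w = (z₁ + z₂, z₁ * z₂)}

def bGamma : Set (ℂ × ℂ) :=
  {w | ∃ z₁ z₂ : ℂ, ‖z₁‖ = 1 ∧ ‖z₂‖ = 1 ∧ w = (z₁ + z₂, z₁ * z₂)}

def Zset (p : MvPolynomial (Fin 2) ℂ) : Set (ℂ × ℂ) :=
  {w | MvPolynomial.eval ![w.1, w.2] p = 0}

def GammaDistinguished (p : MvPolynomial (Fin 2) ℂ) : Prop :=
  (Zset p ∩ G2).Nonempty ∧ Zset p ∩ (GammaSet \ G2) ⊆ bGamma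

def opEval2 {A : Type*} [Ring A] [Algebra ℂ A] (p : MvPolynomial (Fin 2) ℂ) (S P : A) : A :=
  p.support.sum fun m => (MvPolynomial.coeff m p) • (S ^ (m 0) * P ^ (m 1))

/-- Numerical radius of a bounded operator on a Hilbert space. -/
def numRadiusOp {H : Type*} [NormedAddCommGroup H] [InnerProductSpace ℂ H]
    (T : H →L[ℂ] H) : ℝ :=
  sSup {s : ℝ | ∃ x : H, ‖x‖ = 1 ∧ s = ‖(inner ℂ x (T x) : ℂ)‖}

/-!
For `‖λ‖ = 1` the point `(λ, 0)` lies in `Γ \ 𝔾₂` but not in `bΓ`, so for a Γ-distinguished `f`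
the polynomial `p(z) = f(z, 0)` has no zero on the unit circle; in particular `p ≠ 0`. As `p(T) = 0`,
the spectral mapping theorem puts `σ(T)` inside the zeros of `p`. Each `μ ∈ σ(T)` is a root of the
minimal polynomial `(X - μ) q` of `T`, and `q(T) ≠ 0` yields an eigenvector, so `‖μ‖ ≤ ω(T)`.
-/

open Polynomial

theorem spectrum.eval_eq_zero_of_aeval_eq_zero {𝕜 A : Type*} [Field 𝕜] [Ring A] [Algebra 𝕜 A]
    {a : A} {p : 𝕜[X]} (hpa : aeval a p = 0) {μ : 𝕜} (hμ : μ ∈ spectrum 𝕜 a) :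
    p.eval μ = 0 := by
  obtain _ | _ := subsingleton_or_nontrivial A
  · simp [spectrum.of_subsingleton] at hμ
  simpa [hpa, spectrum.zero_eq] using spectrum.subset_polynomial_aeval a p ⟨μ, hμ, rfl⟩

theorem ContinuousLinearMap.exists_apply_eq_smul_of_mem_spectrum {𝕜 E : Type*} [NormedField 𝕜]
    [NormedAddCommGroup E] [NormedSpace 𝕜 E] {T : E →L[𝕜] E} {p : 𝕜[X]} (hp : p ≠ 0)
    (hpT : aeval T p = 0) {μ : 𝕜} (hμ : μ ∈ spectrum 𝕜 T) : ∃ x ≠ 0, T x = μ • x := by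
  have hT : IsIntegral 𝕜 T := IsAlgebraic.isIntegral ⟨p, hp, hpT⟩
  obtain ⟨q, hq⟩ := dvd_iff_isRoot.mpr <|
    spectrum.eval_eq_zero_of_aeval_eq_zero (minpoly.aeval 𝕜 T) hμ
  have hq0 : q ≠ 0 := by
    rintro rfl
    exact minpoly.ne_zero hT (by simpa using hq)
  have hqT : aeval T q ≠ 0 := by
    intro hqT
    have := minpoly.degree_le_of_ne_zero 𝕜 T hq0 hqT
    rw [hq, degree_mul, degree_X_sub_C, degree_eq_natDegree hq0] at this
    norm_cast at this
    omega
  obtain ⟨x, hx⟩ : ∃ x, aeval T q x ≠ 0 := by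
    by_contra! h
    exact hqT (ContinuousLinearMap.ext h)
  refine ⟨aeval T q x, hx, sub_eq_zero.mp ?_⟩
  simpa [hq, Algebra.algebraMap_eq_smul_one] using congr($(minpoly.aeval 𝕜 T) x)

section NumericalRadius

variable {H : Type*} [NormedAddCommGroup H] [InnerProductSpace ℂ H]

theorem norm_inner_apply_self_le (T : H →L[ℂ] H) (x : H) :
    ‖(inner ℂ x (T x) : ℂ)‖ ≤ ‖T‖ * ‖x‖ ^ 2 :=
  calc ‖(inner ℂ x (T x) : ℂ)‖ ≤ ‖x‖ * ‖T x‖ := norm_inner_le_norm x (T x)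
    _ ≤ ‖x‖ * (‖T‖ * ‖x‖) := by gcongr; exact T.le_opNorm x
    _ = ‖T‖ * ‖x‖ ^ 2 := by ring

theorem norm_le_numRadiusOp_of_apply_eq_smul {T : H →L[ℂ] H} {μ : ℂ} {x : H} (hx : x ≠ 0)
    (hTx : T x = μ • x) : ‖μ‖ ≤ numRadiusOp T := by
  set u : H := (‖x‖⁻¹ : ℂ) • x
  have hu : ‖u‖ = 1 := norm_smul_inv_norm hx
  have hTu : T u = μ • u := by simp only [u, map_smul, hTx, smul_comm μ]
  have hbdd : BddAbove {s : ℝ | ∃ x : H, ‖x‖ = 1 ∧ s = ‖(inner ℂ x (T x) : ℂ)‖} := by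
    refine ⟨‖T‖, ?_⟩
    rintro s ⟨y, hy, rfl⟩
    simpa [hy] using norm_inner_apply_self_le T y
  refine le_csSup hbdd ⟨u, hu, ?_⟩
  rw [hTu, inner_smul_right, inner_self_eq_norm_sq_to_K, hu]
  simp

end NumericalRadius

theorem mk_zero_mem_GammaSet_diff_G2 {z : ℂ} (hz : ‖z‖ = 1) : (z, 0) ∈ GammaSet \ G2 := by
  refine ⟨⟨z, 0, hz.le, by simp, by simp⟩, ?_⟩
  rintro ⟨z₁, z₂, h₁, h₂, heq⟩
  obtain ⟨hsum, hprod⟩ := Prod.ext_iff.mp heq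
  rcases mul_eq_zero.mp hprod.symm with rfl | rfl
  · simp only [zero_add] at hsum
    exact h₂.ne (hsum ▸ hz)
  · simp only [add_zero] at hsum
    exact h₁.ne (hsum ▸ hz)

theorem mk_zero_notMem_bGamma (z : ℂ) : (z, 0) ∉ bGamma := by
  rintro ⟨z₁, z₂, h₁, h₂, heq⟩
  have h0 : z₁ * z₂ = 0 := (Prod.ext_iff.mp heq).2.symm
  simpa [h₁, h₂] using congrArg norm h0

theorem GammaDistinguished.eval_mk_zero_ne_zero {f : MvPolynomial (Fin 2) ℂ}
    (hf : GammaDistinguished f) {z : ℂ} (hz : ‖z‖ = 1) : MvPolynomial.eval ![z, 0] f ≠ 0 :=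
  fun hfz => mk_zero_notMem_bGamma z (hf.2 ⟨hfz, mk_zero_mem_GammaSet_diff_G2 hz⟩)

def restrictSndZero {R : Type*} [CommSemiring R] (f : MvPolynomial (Fin 2) R) : R[X] :=
  MvPolynomial.aeval (fun i : Fin 2 => if i = 0 then X else 0) f

theorem eval_restrictSndZero {R : Type*} [CommSemiring R] (f : MvPolynomial (Fin 2) R) (z : R) :
    (restrictSndZero f).eval z = MvPolynomial.eval ![z, 0] f := by
  rw [← coe_aeval_eq_eval, restrictSndZero, ← AlgHom.comp_apply, MvPolynomial.comp_aeval,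
    MvPolynomial.aeval_eq_eval₂Hom, Algebra.algebraMap_self]
  congr 2
  funext i
  fin_cases i <;> simp

theorem aeval_restrictSndZero {A : Type*} [Ring A] [Algebra ℂ A] (f : MvPolynomial (Fin 2) ℂ)
    (a : A) : aeval a (restrictSndZero f) = opEval2 f a 0 := by
  rw [restrictSndZero, MvPolynomial.aeval_def, MvPolynomial.eval₂_eq', map_sum]
  refine Finset.sum_congr rfl fun m _ => ?_
  simp [Fin.prod_univ_two, Algebra.smul_def]

theorem stmt12_general {H : Type*} [NormedAddCommGroup H] [InnerProductSpace ℂ H]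
    [Nontrivial H]
    (T : H →L[ℂ] H) (f : MvPolynomial (Fin 2) ℂ)
    (hfd : GammaDistinguished f) (hann : opEval2 f T 0 = 0) :
    letI p : Polynomial ℂ :=
      MvPolynomial.aeval (fun i : Fin 2 => if i = 0 then Polynomial.X else 0) f
    ¬ (MvPolynomial.X 1 ∣ f) ∧
    0 < p.natDegree ∧
    Polynomial.aeval T p = 0 ∧
    (spectrum ℂ T).Finite ∧
    spectrum ℂ T ⊆ {z : ℂ | Polynomial.eval z p = 0} ∧
    (numRadiusOp T ≤ 1 → spectrum ℂ T ⊆ Metric.ball (0 : ℂ) 1) := by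
  set p := restrictSndZero f
  have hcircle : ∀ z : ℂ, ‖z‖ = 1 → p.eval z ≠ 0 := fun z hz => by
    rw [eval_restrictSndZero]
    exact hfd.eval_mk_zero_ne_zero hz
  have hp0 : p ≠ 0 := fun h => hcircle 1 norm_one (by simp [h])
  have hpT : aeval T p = 0 := (aeval_restrictSndZero f T).trans hann
  have hσ : spectrum ℂ T ⊆ {z | p.eval z = 0} := fun z hz =>
    spectrum.eval_eq_zero_of_aeval_eq_zero hpT hz
  refine ⟨?_, natDegree_pos_of_aeval_root hp0 hpT fun c hc => by simpa using hc,
    hpT, (finite_setOfPred_isRoot hp0).subset hσ, hσ, fun hω z hz => ?_⟩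
  · rintro ⟨g, rfl⟩
    exact hfd.eval_mk_zero_ne_zero norm_one (by simp)
  · obtain ⟨x, hx, hTx⟩ := T.exists_apply_eq_smul_of_mem_spectrum hp0 hpT hz
    exact mem_ball_zero_iff.mpr <| lt_of_le_of_ne
      ((norm_le_numRadiusOp_of_apply_eq_smul hx hTx).trans hω) fun h => hcircle z h (hσ hz)

theorem stmt12 {H : Type*} [NormedAddCommGroup H] [InnerProductSpace ℂ H]
    [CompleteSpace H] [Nontrivial H]
    (T : H →L[ℂ] H) (f : MvPolynomial (Fin 2) ℂ)
    (hfd : GammaDistinguished f) (hann : opEval2 f T 0 = 0) :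
    letI p : Polynomial ℂ :=
      MvPolynomial.aeval (fun i : Fin 2 => if i = 0 then Polynomial.X else 0) f
    ¬ (MvPolynomial.X 1 ∣ f) ∧
    0 < p.natDegree ∧
    Polynomial.aeval T p = 0 ∧
    (spectrum ℂ T).Finite ∧
    spectrum ℂ T ⊆ {z : ℂ | Polynomial.eval z p = 0} ∧
    (numRadiusOp T ≤ 1 → spectrum ℂ T ⊆ Metric.ball (0 : ℂ) 1) :=
  stmt12_general T f hfd hann
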